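/- Let r(u,v) = (u, cosh u cos v, cosh u sin v) be the catenoid and let ρ(u,v) = sinh u cos v. Then: (i) ρ is harmonic: ρ_uu + ρ_vv = 0; (ii) the unit normal is n(u,v) = (1/cosh u)·(sinh u, −cos v, −sin v); (iii) with τ = (ρ_u·r_v − ρ_v·r_u)/‖r_u × r_v‖ one has τ(u,v) × n(u,v) = (1/cosh u)·(cos v, sinh u, 0); consequently Borisenko's special Lagrangian submanifold N = {(p, τ(p)×n(p) + t n(p))} is parametrized by H(u,v,t) = ( (u, cosh u cos v, cosh u sin v), ( cos v/cosh u + t·tanh u, tanh u − t·cos v/cosh u, −t·sin v/cosh u ) ) in ℝ³ ⊕ ℝ³ ≅ ℂ³. -/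

import Mathlib

/-- The catenoid parametrization `r(u,v) = (u, cosh u cos v, cosh u sin v)`. -/
noncomputable def catenoid (u v : ℝ) : Fin 3 → ℝ :=
  ![u, Real.cosh u * Real.cos v, Real.cosh u * Real.sin v]

/-- The harmonic function `ρ(u,v) = sinh u cos v` on the catenoid. -/
noncomputable def rho (u v : ℝ) : ℝ := Real.sinh u * Real.cos v

/-- `∂r/∂u`. -/
noncomputable def ru (u v : ℝ) : Fin 3 → ℝ := fun i => deriv (fun s => catenoid s v i) u

/-- `∂r/∂v`. -/
noncomputable def rv (u v : ℝ) : Fin 3 → ℝ := fun i => deriv (fun s => catenoid u s i) v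

/-- `∂ρ/∂u`. -/
noncomputable def rhou (u v : ℝ) : ℝ := deriv (fun s => rho s v) u

/-- `∂ρ/∂v`. -/
noncomputable def rhov (u v : ℝ) : ℝ := deriv (fun s => rho u s) v

/-- `∂²ρ/∂u²`. -/
noncomputable def rhouu (u v : ℝ) : ℝ := deriv (fun s => rhou s v) u

/-- `∂²ρ/∂v²`. -/
noncomputable def rhovv (u v : ℝ) : ℝ := deriv (fun s => rhov u s) v

/-- The Euclidean inner product on `ℝ³`. -/
def dot3 (a b : Fin 3 → ℝ) : ℝ := a 0 * b 0 + a 1 * b 1 + a 2 * b 2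

/-- The Euclidean norm on `ℝ³`. -/
noncomputable def norm3 (a : Fin 3 → ℝ) : ℝ := Real.sqrt (dot3 a a)

/-- The unit normal `n = (r_u × r_v)/‖r_u × r_v‖` of the catenoid. -/
noncomputable def nrm (u v : ℝ) : Fin 3 → ℝ :=
  (norm3 (crossProduct (ru u v) (rv u v)))⁻¹ • crossProduct (ru u v) (rv u v)

/-- The tangent field `τ = (ρ_u·r_v − ρ_v·r_u)/‖r_u × r_v‖`. -/
noncomputable def tau (u v : ℝ) : Fin 3 → ℝ :=
  (norm3 (crossProduct (ru u v) (rv u v)))⁻¹ • (rhou u v • rv u v - rhov u v • ru u v)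

/-!
The computation is organised around `r_u × r_v = cosh u · (sinh u, −cos v, −sin v)`, whose norm
is `cosh² u` because `sinh² u + 1 = cosh² u`. Dividing out gives `n`; the same identity turns
the third component of `cosh² u · τ = ρ_u r_v − ρ_v r_u` into `sinh² u + cos² v`, after which
`τ × n` and `H = (r, τ × n + t n)` are direct.
-/

open Real Matrix

section CrossProduct

variable {R : Type*} [CommRing R]

lemma cross_vec3 (a₀ a₁ a₂ b₀ b₁ b₂ : R) :
    ![a₀, a₁, a₂] ⨯₃ ![b₀, b₁, b₂] = ![a₁ * b₂ - a₂ * b₁, a₂ * b₀ - a₀ * b₂, a₀ * b₁ - a₁ * b₀] :=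
  cross_apply _ _

lemma smul_cross_smul (a b : R) (x y : Fin 3 → R) : (a • x) ⨯₃ (b • y) = (a * b) • x ⨯₃ y := by
  rw [LinearMap.map_smul₂, LinearMap.map_smul, smul_smul]

end CrossProduct

lemma ru_eq (u v : ℝ) : ru u v = ![1, sinh u * cos v, sinh u * sin v] := by
  funext i
  fin_cases i <;> simp [ru, catenoid]

lemma rv_eq (u v : ℝ) : rv u v = ![0, -(cosh u * sin v), cosh u * cos v] := by
  funext i
  fin_cases i <;> simp [rv, catenoid]

lemma rhou_eq (u v : ℝ) : rhou u v = cosh u * cos v := by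
  simp [rhou, rho]

lemma rhov_eq (u v : ℝ) : rhov u v = -(sinh u * sin v) := by
  simp [rhov, rho]

lemma rhouu_eq (u v : ℝ) : rhouu u v = sinh u * cos v := by
  simp [rhouu, rhou_eq]

lemma rhovv_eq (u v : ℝ) : rhovv u v = -(sinh u * cos v) := by
  simp [rhovv, rhov_eq]

lemma rhouu_add_rhovv (u v : ℝ) : rhouu u v + rhovv u v = 0 := by
  rw [rhouu_eq, rhovv_eq, add_neg_cancel]

lemma cross_ru_rv (u v : ℝ) :
    ru u v ⨯₃ rv u v = cosh u • ![sinh u, -cos v, -sin v] := by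
  rw [ru_eq, rv_eq, cross_vec3, smul_vec3]
  refine vec3_eq ?_ (by ring) (by ring)
  linear_combination (sinh u * cosh u) * sin_sq_add_cos_sq v

lemma norm3_cross_ru_rv (u v : ℝ) : norm3 (ru u v ⨯₃ rv u v) = cosh u ^ 2 := by
  rw [norm3, cross_ru_rv, smul_vec3, ← sqrt_sq (sq_nonneg (cosh u))]
  congr 1
  simp only [dot3, cons_val_zero, cons_val_one, cons_val_two,
    head_cons, tail_cons, smul_eq_mul]
  linear_combination cosh u ^ 2 * (sin_sq_add_cos_sq v - cosh_sq u)

lemma nrm_eq (u v : ℝ) : nrm u v = (cosh u)⁻¹ • ![sinh u, -cos v, -sin v] := by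
  have hc : cosh u ≠ 0 := (cosh_pos u).ne'
  rw [nrm, norm3_cross_ru_rv, cross_ru_rv, smul_smul]
  congr 1
  field_simp

lemma tau_eq (u v : ℝ) :
    tau u v = (cosh u ^ 2)⁻¹ • ![sinh u * sin v, -(sin v * cos v), sinh u ^ 2 + cos v ^ 2] := by
  rw [tau, norm3_cross_ru_rv, rhou_eq, rhov_eq, ru_eq, rv_eq, smul_vec3, smul_vec3]
  congr 1
  simp only [cons_sub_cons, empty_sub_empty]
  refine vec3_eq (by ring) ?_ ?_
  · linear_combination -(sin v * cos v) * cosh_sq u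
  · linear_combination cos v ^ 2 * cosh_sq u + sinh u ^ 2 * sin_sq_add_cos_sq v

lemma cross_tau_nrm (u v : ℝ) :
    tau u v ⨯₃ nrm u v = (cosh u)⁻¹ • ![cos v, sinh u, 0] := by
  have hc : cosh u ≠ 0 := (cosh_pos u).ne'
  have hcross : ![sinh u * sin v, -(sin v * cos v), sinh u ^ 2 + cos v ^ 2] ⨯₃
      ![sinh u, -cos v, -sin v] = cosh u ^ 2 • ![cos v, sinh u, 0] := by
    rw [cross_vec3, smul_vec3]
    refine vec3_eq ?_ ?_ (by ring)
    · linear_combination cos v * (sin_sq_add_cos_sq v - cosh_sq u)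
    · linear_combination sinh u * (sin_sq_add_cos_sq v - cosh_sq u)
  rw [tau_eq, nrm_eq, smul_cross_smul, hcross, smul_smul]
  congr 1
  field_simp

/-- For the catenoid and `ρ = sinh u cos v`: `ρ` is harmonic, the unit normal is
`n = (1/cosh u)(sinh u, −cos v, −sin v)`, `τ × n = (1/cosh u)(cos v, sinh u, 0)`, and
Borisenko's special Lagrangian submanifold `N` is parametrized by
`H(u,v,t) = ((u, cosh u cos v, cosh u sin v),
(cos v/cosh u + t tanh u, tanh u − t cos v/cosh u, −t sin v/cosh u))`. -/
theorem stmt10 (u v t : ℝ) :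
    rhouu u v + rhovv u v = 0 ∧
    nrm u v = (Real.cosh u)⁻¹ • ![Real.sinh u, -Real.cos v, -Real.sin v] ∧
    crossProduct (tau u v) (nrm u v) = (Real.cosh u)⁻¹ • ![Real.cos v, Real.sinh u, 0] ∧
    (catenoid u v, crossProduct (tau u v) (nrm u v) + t • nrm u v) =
      (![u, Real.cosh u * Real.cos v, Real.cosh u * Real.sin v],
       ![Real.cos v / Real.cosh u + t * Real.tanh u,
         Real.tanh u - t * (Real.cos v / Real.cosh u),
         -(t * (Real.sin v / Real.cosh u))]) := by
  refine ⟨rhouu_add_rhovv u v, nrm_eq u v, cross_tau_nrm u v, Prod.ext rfl ?_⟩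
  rw [cross_tau_nrm, nrm_eq, smul_vec3, smul_vec3, smul_vec3, vec3_add, tanh_eq_sinh_div_cosh]
  exact vec3_eq (by ring) (by ring) (by ring)
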